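/- For every finite simple graph G, a(G^{×2}) ≥ a(G), where a(K) = max{|U|/(|U| + |N_K(U)|) : U a nonempty independent set of K} and G^{×2} is the categorical square of G. -/

import Mathlib

open scoped Classical
open Filter

/-- Categorical (tensor) product of two simple graphs. -/
def tensorProd {α β : Type*} (G : SimpleGraph α) (H : SimpleGraph β) :
    SimpleGraph (α × β) where
  Adj p q := G.Adj p.1 q.1 ∧ H.Adj p.2 q.2
  symm := ⟨fun p q h => ⟨h.1.symm, h.2.symm⟩⟩
  loopless := ⟨fun p h => G.irrefl h.1⟩

/-- A finset is independent. -/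
def IsIndep {α : Type*} (G : SimpleGraph α) (U : Finset α) : Prop :=
  ∀ u ∈ U, ∀ v ∈ U, ¬ G.Adj u v

/-- Neighborhood of a finset. -/
noncomputable def nbhd {α : Type*} [Fintype α] (G : SimpleGraph α) (U : Finset α) : Finset α :=
  Finset.univ.filter (fun v => ∃ u ∈ U, G.Adj u v)

/-- Independence number. -/
noncomputable def alphaNum {α : Type*} [Fintype α] (G : SimpleGraph α) : ℕ :=
  sSup {n : ℕ | ∃ U : Finset α, IsIndep G U ∧ U.card = n}

/-- Independence ratio. -/
noncomputable def iRatio {α : Type*} [Fintype α] (G : SimpleGraph α) : ℝ :=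
  (alphaNum G : ℝ) / (Fintype.card α : ℝ)

/-- a(G): the maximum of |U|/(|U|+|N(U)|) over nonempty independent sets. -/
noncomputable def aRatio {α : Type*} [Fintype α] (G : SimpleGraph α) : ℝ :=
  sSup {r : ℝ | ∃ U : Finset α, U.Nonempty ∧ IsIndep G U ∧
    r = (U.card : ℝ) / ((U.card : ℝ) + ((nbhd G U).card : ℝ))}

/-- b(G): the minimum of |N(U)|/|U| over nonempty independent sets. -/
noncomputable def bRatio {α : Type*} [Fintype α] (G : SimpleGraph α) : ℝ :=
  sInf {r : ℝ | ∃ U : Finset α, U.Nonempty ∧ IsIndep G U ∧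
    r = ((nbhd G U).card : ℝ) / (U.card : ℝ)}

/-- a*(G). -/
noncomputable def aStar {α : Type*} [Fintype α] (G : SimpleGraph α) : ℝ :=
  if aRatio G ≤ 1/2 then aRatio G else 1

/-- k-th categorical power of G. -/
def tensorPow {α : Type*} (G : SimpleGraph α) (k : ℕ) : SimpleGraph (Fin k → α) where
  Adj x y := x ≠ y ∧ ∀ i, G.Adj (x i) (y i)
  symm := ⟨fun x y h => ⟨h.1.symm, fun i => (h.2 i).symm⟩⟩
  loopless := ⟨fun x h => h.1 rfl⟩

/-- Disjoint union of two simple graphs. -/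
def disjUnion {α β : Type*} (G : SimpleGraph α) (H : SimpleGraph β) :
    SimpleGraph (α ⊕ β) where
  Adj p q := match p, q with
    | Sum.inl a, Sum.inl b => G.Adj a b
    | Sum.inr a, Sum.inr b => H.Adj a b
    | _, _ => False
  symm := by constructor; rintro (a|a) (b|b) h <;> simp_all <;> exact h.symm
  loopless := by constructor; rintro (a|a) h <;> simp_all

/-
If `U` is independent in `G`, then `U × V(H)` is independent in `G × H`, since adjacency in the
product requires adjacency of the first coordinates. Its neighbourhood lies in `N(U) × V(H)`, so
scaling both `|U|` and `|N(U)|` by `|V(H)|` shows that `U × V(H)` realizes at least the ratio of `U`.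
-/

open Finset

lemma IsIndep.tensorProd_prod_univ {α β : Type*} [Fintype β] {G : SimpleGraph α}
    (H : SimpleGraph β) {U : Finset α} (hUi : IsIndep G U) : IsIndep (tensorProd G H) (U ×ˢ univ) :=
  fun _ hp _ hq hadj => hUi _ (mem_product.1 hp).1 _ (mem_product.1 hq).1 hadj.1

section

variable {α β : Type*} [Fintype α] [Fintype β]

noncomputable def indepRatio (G : SimpleGraph α) (U : Finset α) : ℝ :=
  (U.card : ℝ) / ((U.card : ℝ) + ((nbhd G U).card : ℝ))

lemma indepRatio_nonneg (G : SimpleGraph α) (U : Finset α) : 0 ≤ indepRatio G U := by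
  unfold indepRatio
  positivity

lemma indepRatio_le_one (G : SimpleGraph α) (U : Finset α) : indepRatio G U ≤ 1 :=
  div_le_one_of_le₀ (le_add_of_nonneg_right (Nat.cast_nonneg _)) (by positivity)

lemma aRatio_nonneg (G : SimpleGraph α) : 0 ≤ aRatio G :=
  Real.sSup_nonneg fun _ ⟨U, _, _, hr⟩ => hr ▸ indepRatio_nonneg G U

lemma indepRatio_le_aRatio (G : SimpleGraph α) {U : Finset α} (hU : U.Nonempty)
    (hUi : IsIndep G U) : indepRatio G U ≤ aRatio G :=
  le_csSup ⟨1, fun _ ⟨V, _, _, hr⟩ => hr ▸ indepRatio_le_one G V⟩ ⟨U, hU, hUi, rfl⟩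

-- `hc` is needed because of the junk value `sSup ∅ = 0` when there is no nonempty `U`.
lemma aRatio_le (G : SimpleGraph α) {c : ℝ}
    (h : ∀ U : Finset α, U.Nonempty → IsIndep G U → indepRatio G U ≤ c) (hc : 0 ≤ c) :
    aRatio G ≤ c :=
  Real.sSup_le (fun _ ⟨U, hU, hUi, hr⟩ => hr ▸ h U hU hUi) hc

lemma nbhd_tensorProd_prod_univ_subset (G : SimpleGraph α) (H : SimpleGraph β) (U : Finset α) :
    nbhd (tensorProd G H) (U ×ˢ univ) ⊆ nbhd G U ×ˢ univ := by
  intro q hq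
  obtain ⟨p, hp, hadj⟩ := (mem_filter.1 hq).2
  exact mem_product.2 ⟨mem_filter.2 ⟨mem_univ _, p.1, (mem_product.1 hp).1, hadj.1⟩, mem_univ _⟩

lemma indepRatio_le_indepRatio_tensorProd_prod_univ [Nonempty β] (G : SimpleGraph α)
    (H : SimpleGraph β) {U : Finset α} (hU : U.Nonempty) :
    indepRatio G U ≤ indepRatio (tensorProd G H) (U ×ˢ univ) := by
  have hm : (0 : ℝ) < Fintype.card β := by exact_mod_cast Fintype.card_pos
  have hN :
      ((nbhd (tensorProd G H) (U ×ˢ univ)).card : ℝ) ≤ (nbhd G U).card * Fintype.card β := by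
    exact_mod_cast (card_le_card (nbhd_tensorProd_prod_univ_subset G H U)).trans_eq
      (card_product _ _)
  set m : ℝ := (Fintype.card β : ℝ)
  have hUm : 0 < (U.card : ℝ) * m := mul_pos (by exact_mod_cast hU.card_pos) hm
  calc indepRatio G U = U.card * m / (U.card * m + (nbhd G U).card * m) := by
        rw [indepRatio, ← add_mul, mul_div_mul_right _ _ hm.ne']
    _ ≤ U.card * m / (U.card * m + (nbhd (tensorProd G H) (U ×ˢ univ)).card) :=
        div_le_div_of_nonneg_left hUm.le (by positivity) (by linarith)
    _ = indepRatio (tensorProd G H) (U ×ˢ univ) := by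
        rw [indepRatio, card_product, card_univ]
        push_cast
        rfl

end

theorem stmt6_general {α : Type*} [Fintype α] (G : SimpleGraph α) :
    aRatio G ≤ aRatio (tensorProd G G) := by
  refine aRatio_le G (fun U hU hUi => ?_) (aRatio_nonneg _)
  have : Nonempty α := ⟨hU.choose⟩
  exact (indepRatio_le_indepRatio_tensorProd_prod_univ G G hU).trans
    (indepRatio_le_aRatio _ (hU.product univ_nonempty) (hUi.tensorProd_prod_univ G))

theorem stmt6 {α : Type*} [Fintype α] [Nonempty α] (G : SimpleGraph α) :
    aRatio G ≤ aRatio (tensorProd G G) :=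
  stmt6_general G
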